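/- Gentle operator lemma for ensembles (Lemma 4): Let X be a finite index set, p : X → ℝ a probability distribution (p(x) ≥ 0, Σ_x p(x) = 1), and for each x let ρ_x be a density matrix over a fixed finite index type; set ρ̄ = Σ_x p(x) ρ_x. Let Λ be a matrix with 0 ≤ Λ ≤ I and suppose Tr[Λ ρ̄] ≥ 1 − ε for some ε ≥ 0. Then Σ_x p(x) ‖√Λ ρ_x √Λ − ρ_x‖₁ ≤ 2√ε, where √Λ is the positive semidefinite square root of Λ. -/

import Mathlib

open scoped Matrix ComplexOrder

/-- The positive semidefinite square root of a positive semidefinite matrix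
(Mathlib's former `Matrix.PosSemidef.sqrt`, removed upstream; old definition restored). -/
noncomputable def Matrix.PosSemidef.sqrt {n : Type*} {𝕜 : Type*} [Fintype n] [RCLike 𝕜]
    [DecidableEq n] {A : Matrix n n 𝕜} (hA : A.PosSemidef) : Matrix n n 𝕜 :=
  hA.1.eigenvectorUnitary * Matrix.diagonal (fun i => ((Real.sqrt (hA.1.eigenvalues i) : ℝ) : 𝕜)) *
    (star hA.1.eigenvectorUnitary : Matrix n n 𝕜)

/-- The trace norm `‖A‖₁ = Tr[√(AᴴA)]` of a complex square matrix. -/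
noncomputable def traceNorm {d : Type*} [Fintype d] [DecidableEq d]
    (A : Matrix d d ℂ) : ℝ :=
  ((Matrix.posSemidef_conjTranspose_mul_self A).sqrt.trace).re

/-!
Write `S = √Λ` and `Q = √ρ`. The Hermitian matrix `SρS - ρ` factors as
`(SQ)(Q(S - 1)) + ((S - 1)Q)Q`, and its trace norm is `Re Tr[U (SρS - ρ)]` for the unitary sign
`U` of `SρS - ρ`. Cauchy–Schwarz for the Hilbert–Schmidt inner product then bounds it by
`√Tr[Λρ] √Tr[(1 - S)²ρ] + √Tr[(1 - S)²ρ]`. Since `0 ≤ Λ ≤ 1` forces `Λ ≤ S`, we have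
`(1 - S)² = 1 - Λ - 2(S - Λ) ≤ 1 - Λ`, so `‖SρS - ρ‖₁ ≤ 2 √Tr[(1 - Λ)ρ]`. Averaging over the
ensemble, Jensen's inequality for the concave square root turns `Σ p(x) √Tr[(1 - Λ)ρₓ]` into
`√Tr[(1 - Λ)ρ̄] ≤ √ε`.
-/

open scoped MatrixOrder

section SqrtOfLeOne

variable {A : Type*} [Ring A] [StarRing A] [TopologicalSpace A] [Algebra ℝ A]
  [ContinuousFunctionalCalculus ℝ A IsSelfAdjoint] [PartialOrder A] [StarOrderedRing A]
  [NonnegSpectrumClass ℝ A] [IsSemitopologicalRing A] [T2Space A]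

lemma CFC.le_sqrt_of_le_one {a : A} (ha₀ : 0 ≤ a) (ha₁ : a ≤ 1) : a ≤ CFC.sqrt a := by
  have hspec := (CFC.le_one_iff (R := ℝ) a).mp ha₁
  rw [CFC.sqrt_eq_real_sqrt a, cfcₙ_eq_cfc]
  conv_lhs => rw [← cfc_id ℝ a]
  refine cfc_mono fun x hx => ?_
  have hx₀ : 0 ≤ x := spectrum_nonneg_of_nonneg ha₀ hx
  exact Real.le_sqrt_of_sq_le (by simp only [id]; nlinarith [hspec x hx])

lemma CFC.sqrt_sub_one_mul_sqrt_sub_one_le {a : A} (ha₀ : 0 ≤ a) (ha₁ : a ≤ 1) :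
    (CFC.sqrt a - 1) * (CFC.sqrt a - 1) ≤ 1 - a := by
  have hle := sub_nonneg.mpr (CFC.le_sqrt_of_le_one ha₀ ha₁)
  set s := CFC.sqrt a
  have hsum : 1 - a = (s - 1) * (s - 1) + ((s - a) + (s - a)) := by
    rw [← CFC.sqrt_mul_sqrt_self a ha₀]
    noncomm_ring
  rw [hsum]
  exact le_add_of_nonneg_right (add_nonneg hle hle)

end SqrtOfLeOne

namespace Matrix

variable {n 𝕜 : Type*} [Fintype n] [RCLike 𝕜]

lemma IsHermitian.trace_conjTranspose_mul_self_of_mul {X Q : Matrix n n 𝕜} (hX : X.IsHermitian)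
    (hQ : Q.IsHermitian) : ((X * Q)ᴴ * (X * Q)).trace = (X * X * (Q * Q)).trace := by
  rw [conjTranspose_mul, hX.eq, hQ.eq]
  simp only [Matrix.mul_assoc]
  rw [trace_mul_comm Q]
  simp only [Matrix.mul_assoc]

lemma IsHermitian.trace_conjTranspose_mul_self_of_mul' {X Q : Matrix n n 𝕜} (hX : X.IsHermitian)
    (hQ : Q.IsHermitian) : ((Q * X)ᴴ * (Q * X)).trace = (X * X * (Q * Q)).trace := by
  rw [conjTranspose_mul, hX.eq, hQ.eq]
  simp only [Matrix.mul_assoc]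
  rw [trace_mul_comm X (X * (Q * Q))]
  simp only [Matrix.mul_assoc]

variable [DecidableEq n]

lemma PosSemidef.sqrt_eq_cfcSqrt {A : Matrix n n 𝕜} (hA : A.PosSemidef) :
    hA.sqrt = CFC.sqrt A := by
  rw [CFC.sqrt_eq_cfc, cfc_nnreal_eq_real _ A hA.nonneg, hA.1.cfc_eq, IsHermitian.cfc,
    Unitary.conjStarAlgAut_apply, PosSemidef.sqrt]
  congr 3
  funext i
  simp [hA.eigenvalues_nonneg i]

lemma trace_mul_nonneg {A B : Matrix n n 𝕜} (hA : 0 ≤ A) (hB : 0 ≤ B) :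
    0 ≤ (A * B).trace := by
  have hS : IsSelfAdjoint (CFC.sqrt A) := (CFC.sqrt_nonneg A).isSelfAdjoint
  have hSBS := (nonneg_iff_posSemidef.mp hB).mul_mul_conjTranspose_same (CFC.sqrt A)
  rw [← star_eq_conjTranspose, hS.star_eq] at hSBS
  calc (0 : 𝕜) ≤ (CFC.sqrt A * B * CFC.sqrt A).trace := hSBS.trace_nonneg
    _ = (A * B).trace := by
      rw [trace_mul_comm, ← Matrix.mul_assoc, CFC.sqrt_mul_sqrt_self A hA]

lemma trace_mul_le_trace_mul_of_le {A B R : Matrix n n 𝕜} (hAB : A ≤ B) (hR : 0 ≤ R) :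
    (A * R).trace ≤ (B * R).trace := by
  rw [← sub_nonneg, ← trace_sub, ← Matrix.sub_mul]
  exact trace_mul_nonneg (sub_nonneg.mpr hAB) hR

open RCLike

lemma re_trace_mul_le (A B : Matrix n n 𝕜) :
    re (A * B).trace ≤ √(re (Aᴴ * A).trace) * √(re (Bᴴ * B).trace) := by
  let := toMatrixSeminormedAddCommGroup (1 : Matrix n n 𝕜) PosSemidef.one
  let := toMatrixInnerProductSpace (1 : Matrix n n 𝕜) PosSemidef.one
  have h := re_inner_le_norm (𝕜 := 𝕜) Aᴴ B
  rw [norm_eq_sqrt_re_inner (𝕜 := 𝕜), norm_eq_sqrt_re_inner (𝕜 := 𝕜) B] at h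
  change re (B * 1 * Aᴴᴴ).trace ≤ √(re (Aᴴ * 1 * Aᴴᴴ).trace) * √(re (B * 1 * Bᴴ).trace) at h
  simpa only [Matrix.mul_one, conjTranspose_conjTranspose, trace_mul_comm B, trace_mul_comm Aᴴ]
    using h

lemma re_trace_mul_mul_le_of_mem_unitary {U : Matrix n n 𝕜} (hU : U ∈ unitary (Matrix n n 𝕜))
    (A B : Matrix n n 𝕜) :
    re (U * (A * B)).trace ≤ √(re (Aᴴ * A).trace) * √(re (Bᴴ * B).trace) := by
  have hUA : (U * A)ᴴ * (U * A) = Aᴴ * A := by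
    rw [conjTranspose_mul, Matrix.mul_assoc, ← Matrix.mul_assoc Uᴴ, ← star_eq_conjTranspose U,
      Unitary.star_mul_self_of_mem hU, Matrix.one_mul]
  simpa only [Matrix.mul_assoc, hUA] using re_trace_mul_le (U * A) B

lemma IsHermitian.exists_mem_unitary_cfcAbs_eq_mul {H : Matrix n n 𝕜} (hH : H.IsHermitian) :
    ∃ U ∈ unitary (Matrix n n 𝕜), CFC.abs H = U * H := by
  have hsa : IsSelfAdjoint H := hH
  let sign : ℝ → ℝ := fun x => if x < 0 then -1 else 1
  have hcont : ContinuousOn sign (spectrum ℝ H) := H.finite_real_spectrum.continuousOn _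
  refine ⟨cfc sign H, (cfc_unitary_iff sign H).mpr fun x _ => ?_, ?_⟩
  · by_cases h : x < 0 <;> simp [sign, h]
  · calc CFC.abs H = cfc (fun x => sign x * x) H := by
          rw [CFC.abs_eq_cfc_norm H]
          refine cfc_congr fun x _ => ?_
          by_cases h : x < 0
          · simp [sign, h, abs_of_neg h]
          · simp [sign, h, abs_of_nonneg (not_lt.mp h)]
      _ = cfc sign H * H := by rw [cfc_mul sign (fun x => x) H, cfc_id' ℝ H]

end Matrix

section TraceNorm

variable {d : Type*} [Fintype d] [DecidableEq d]

lemma traceNorm_eq_re_trace_cfcAbs (A : Matrix d d ℂ) : traceNorm A = (CFC.abs A).trace.re := by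
  rw [traceNorm, Matrix.PosSemidef.sqrt_eq_cfcSqrt, CFC.abs, Matrix.star_eq_conjTranspose]

lemma traceNorm_le_of_isHermitian_of_eq_add {H A₁ B₁ A₂ B₂ : Matrix d d ℂ} (hH : H.IsHermitian)
    (hsum : H = A₁ * B₁ + A₂ * B₂) :
    traceNorm H ≤ √(A₁ᴴ * A₁).trace.re * √(B₁ᴴ * B₁).trace.re +
      √(A₂ᴴ * A₂).trace.re * √(B₂ᴴ * B₂).trace.re := by
  obtain ⟨U, hU, habs⟩ := hH.exists_mem_unitary_cfcAbs_eq_mul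
  rw [traceNorm_eq_re_trace_cfcAbs, habs, hsum, Matrix.mul_add, Matrix.trace_add, Complex.add_re]
  exact add_le_add (Matrix.re_trace_mul_mul_le_of_mem_unitary hU A₁ B₁)
    (Matrix.re_trace_mul_mul_le_of_mem_unitary hU A₂ B₂)

lemma traceNorm_sqrt_mul_mul_sqrt_sub_le {Λ R : Matrix d d ℂ} (hΛ₀ : 0 ≤ Λ) (hΛ₁ : Λ ≤ 1)
    (hR : 0 ≤ R) (hR₁ : R.trace = 1) :
    traceNorm (CFC.sqrt Λ * R * CFC.sqrt Λ - R) ≤ 2 * √((1 - Λ) * R).trace.re := by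
  set S := CFC.sqrt Λ
  set Q := CFC.sqrt R
  have hS : S.IsHermitian := (CFC.sqrt_nonneg Λ).isSelfAdjoint
  have hQ : Q.IsHermitian := (CFC.sqrt_nonneg R).isSelfAdjoint
  have hS₁ : (S - 1).IsHermitian := hS.sub Matrix.isHermitian_one
  have hSS : S * S = Λ := CFC.sqrt_mul_sqrt_self Λ hΛ₀
  have hQQ : Q * Q = R := CFC.sqrt_mul_sqrt_self R hR
  have hherm : (S * R * S - R).IsHermitian := by
    simp only [Matrix.IsHermitian, Matrix.conjTranspose_sub, Matrix.conjTranspose_mul, hS.eq,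
      (Matrix.nonneg_iff_posSemidef.mp hR).isHermitian.eq, Matrix.mul_assoc]
  have hsplit : S * R * S - R = (S * Q) * (Q * (S - 1)) + ((S - 1) * Q) * Q := by
    rw [← hQQ]; noncomm_ring
  have hΛR : (Λ * R).trace.re ≤ 1 := by
    simpa [hR₁] using Complex.le_def.mp (Matrix.trace_mul_le_trace_mul_of_le hΛ₁ hR) |>.1
  have hSR : ((S - 1) * (S - 1) * R).trace.re ≤ ((1 - Λ) * R).trace.re :=
    (Complex.le_def.mp (Matrix.trace_mul_le_trace_mul_of_le
      (CFC.sqrt_sub_one_mul_sqrt_sub_one_le hΛ₀ hΛ₁) hR)).1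
  calc traceNorm (S * R * S - R)
      ≤ √(Λ * R).trace.re * √((S - 1) * (S - 1) * R).trace.re +
          √((S - 1) * (S - 1) * R).trace.re * √R.trace.re := by
        have := traceNorm_le_of_isHermitian_of_eq_add hherm hsplit
        rwa [hS.trace_conjTranspose_mul_self_of_mul hQ, hS₁.trace_conjTranspose_mul_self_of_mul' hQ,
          hS₁.trace_conjTranspose_mul_self_of_mul hQ, hQ.eq, hQQ, hSS] at this
    _ ≤ 2 * √((1 - Λ) * R).trace.re := by
        have h₁ : √(Λ * R).trace.re ≤ 1 := Real.sqrt_le_one.mpr hΛR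
        have h₂ := Real.sqrt_le_sqrt hSR
        rw [hR₁, Complex.one_re, Real.sqrt_one]
        nlinarith [Real.sqrt_nonneg (Λ * R).trace.re,
          Real.sqrt_nonneg ((S - 1) * (S - 1) * R).trace.re]

end TraceNorm

section Ensemble

variable {X d : Type*} [Fintype X] [Fintype d] {p : X → ℝ} {ρ : X → Matrix d d ℂ}

lemma trace_sum_smul_eq_one (hp : ∑ x, p x = 1) (hρ : ∀ x, (ρ x).trace = 1) :
    (∑ x, (p x : ℂ) • ρ x).trace = 1 := by
  simp only [Matrix.trace_sum, Matrix.trace_smul, hρ, smul_eq_mul, mul_one]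
  exact_mod_cast hp

lemma re_trace_mul_sum_smul (A : Matrix d d ℂ) :
    (A * ∑ x, (p x : ℂ) • ρ x).trace.re = ∑ x, p x • (A * ρ x).trace.re := by
  simp only [Matrix.mul_sum, Matrix.trace_sum, Complex.re_sum, Matrix.mul_smul, Matrix.trace_smul,
    smul_eq_mul, Complex.re_ofReal_mul]

end Ensemble

theorem gentle_operator_ensemble_general {X d : Type*} [Fintype X] [Fintype d] [DecidableEq d]
    (p : X → ℝ) (hp : ∀ x, 0 ≤ p x) (hp1 : ∑ x, p x = 1)
    (ρ : X → Matrix d d ℂ)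
    (hρ : ∀ x, (ρ x).PosSemidef ∧ (ρ x).trace = 1)
    (Λ : Matrix d d ℂ) (hΛ : Λ.PosSemidef)
    (hΛI : ((1 : Matrix d d ℂ) - Λ).PosSemidef)
    (ε : ℝ)
    (hTr : 1 - ε ≤ ((Λ * ∑ x, (p x : ℂ) • ρ x).trace).re) :
    ∑ x, p x * traceNorm (hΛ.sqrt * ρ x * hΛ.sqrt - ρ x) ≤ 2 * Real.sqrt ε := by
  set s : X → ℝ := fun x => ((1 - Λ) * ρ x).trace.re
  have hs : ∀ x, 0 ≤ s x := fun x =>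
    (Complex.nonneg_iff.mp (Matrix.trace_mul_nonneg hΛI.nonneg (hρ x).1.nonneg)).1
  have hsum : ∑ x, p x • s x ≤ ε := by
    rw [← re_trace_mul_sum_smul, Matrix.sub_mul, Matrix.one_mul, Matrix.trace_sub,
      trace_sum_smul_eq_one hp1 fun x => (hρ x).2, Complex.sub_re, Complex.one_re]
    linarith
  calc ∑ x, p x * traceNorm (hΛ.sqrt * ρ x * hΛ.sqrt - ρ x)
      ≤ ∑ x, p x * (2 * √(s x)) := by
        gcongr with x
        · exact hp x
        rw [hΛ.sqrt_eq_cfcSqrt]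
        exact traceNorm_sqrt_mul_mul_sqrt_sub_le hΛ.nonneg (Matrix.le_iff.mpr hΛI)
          (hρ x).1.nonneg (hρ x).2
    _ = 2 * ∑ x, p x • √(s x) := by simp only [Finset.mul_sum, smul_eq_mul, mul_left_comm]
    _ ≤ 2 * √(∑ x, p x • s x) := by
        gcongr
        exact Real.strictConcaveOn_sqrt.concaveOn.le_map_sum (fun x _ => hp x) hp1 fun x _ => hs x
    _ ≤ 2 * √ε := by gcongr

/-- Gentle operator lemma for ensembles: if `0 ≤ Λ ≤ I` has overlap at least `1 − ε` with the
ensemble average `ρ̄ = Σ_x p(x) ρ_x`, then `Σ_x p(x) ‖√Λ ρ_x √Λ − ρ_x‖₁ ≤ 2√ε`. -/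
theorem gentle_operator_ensemble {X d : Type*} [Fintype X] [Fintype d] [DecidableEq d]
    (p : X → ℝ) (hp : ∀ x, 0 ≤ p x) (hp1 : ∑ x, p x = 1)
    (ρ : X → Matrix d d ℂ)
    (hρ : ∀ x, (ρ x).PosSemidef ∧ (ρ x).trace = 1)
    (Λ : Matrix d d ℂ) (hΛ : Λ.PosSemidef)
    (hΛI : ((1 : Matrix d d ℂ) - Λ).PosSemidef)
    (ε : ℝ) (hε : 0 ≤ ε)
    (hTr : 1 - ε ≤ ((Λ * ∑ x, (p x : ℂ) • ρ x).trace).re) :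
    ∑ x, p x * traceNorm (hΛ.sqrt * ρ x * hΛ.sqrt - ρ x) ≤ 2 * Real.sqrt ε :=
  gentle_operator_ensemble_general p hp hp1 ρ hρ Λ hΛ hΛI ε hTr
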